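/- Let G be a graph, v a vertex, and u a neighbor of v. If the edge f = {u,v} is revealed by v, then the set of edges revealed by {u,v} equals the set of edges revealed by v alone: O_{{u,v}} = O_v. -/

import Mathlib

open SimpleGraph

variable {V : Type*}

/-- A walk is non-backtracking if no vertex equals the vertex two steps later. -/
def NonBacktracking {G : SimpleGraph V} {u v : V} (p : G.Walk u v) : Prop :=
  ∀ i : ℕ, i + 2 < p.support.length → p.support[i]? ≠ p.support[i + 2]?

/-- The weight of a walk: the sum of the weights of its edges, with multiplicity. -/
def walkWeight {G : SimpleGraph V} (F : Sym2 V → ℝ) {u v : V} (p : G.Walk u v) : ℝ :=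
  (p.edges.map F).sum

/-- An edge `e` is revealed by a set `S` of vertices if an integer combination of weights of
closed non-backtracking walks from vertices of `S` equals a nonzero multiple of the weight
of `e`, for every weight function. -/
def RevealedBySet (G : SimpleGraph V) (S : Set V) (e : Sym2 V) : Prop :=
  ∃ (l : ℕ) (w : Fin l → V) (W : ∀ i, G.Walk (w i) (w i)) (c : Fin l → ℤ) (ce : ℤ),
    (∀ i, w i ∈ S) ∧ (∀ i, NonBacktracking (W i)) ∧ (∀ i, c i ≠ 0) ∧ ce ≠ 0 ∧
    ∀ F : Sym2 V → ℝ, ∑ i, (c i : ℝ) * walkWeight F (W i) = (ce : ℝ) * F e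

/-- A walk `W` is revealed by the vertex `v`. -/
def WalkRevealedBy (G : SimpleGraph V) (v : V) {a b : V} (W : G.Walk a b) : Prop :=
  ∃ (l : ℕ) (Ws : Fin l → G.Walk v v) (c : Fin l → ℤ) (cW : ℤ),
    (∀ i, NonBacktracking (Ws i)) ∧ (∀ i, c i ≠ 0) ∧ cW ≠ 0 ∧
    ∀ F : Sym2 V → ℝ, ∑ i, (c i : ℝ) * walkWeight F (Ws i) = (cW : ℝ) * walkWeight F W

/-- `G` is odometric: every edge is revealed by every single vertex. -/
def Odometric (G : SimpleGraph V) : Prop :=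
  ∀ v : V, ∀ e ∈ G.edgeSet, RevealedBySet G {v} e

/-- `u` is a cut vertex of `G`. -/
def IsCutVertex (G : SimpleGraph V) (u : V) : Prop :=
  G.Connected ∧ ¬ (G.induce {x : V | x ≠ u}).Connected

/-- The induced subgraph on `B` is 2-connected. -/
def TwoConnectedOn (G : SimpleGraph V) (B : Set V) : Prop :=
  3 ≤ B.ncard ∧ (G.induce B).Connected ∧ ∀ u ∈ B, (G.induce (B \ {u})).Connected

/-- `B` is a maximal 2-connected block of `G`. -/
def IsBlock (G : SimpleGraph V) (B : Set V) : Prop :=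
  TwoConnectedOn G B ∧ ∀ B', B ⊆ B' → TwoConnectedOn G B' → B' = B

/-!
A closed non-backtracking walk at `u` can be moved to `v` at the cost of an integer multiple of
the weight of `f = s(u, v)`: at the start, either drop a leading step `u → v` or prepend the
step `v → u`, and the same at the end after reversing the walk. So a combination of walks from
`{u, v}` revealing `e` becomes a combination of walks from `v` whose weight is
`ce * F e - D * F f`, and adding `D` times the combination from `v` that reveals `f` (after
scaling both to a common multiple of `F f`) cancels the `F f` term.
-/

variable {G : SimpleGraph V}

section Walks

lemma nonBacktracking_cons_iff {a x b : V} (h : G.Adj a x) (p : G.Walk x b) :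
    NonBacktracking (Walk.cons h p) ↔ NonBacktracking p ∧ p.support[1]? ≠ some a := by
  simp only [NonBacktracking, Walk.support_cons, List.length_cons]
  constructor
  · intro hp
    refine ⟨fun i hi => by simpa using hp (i + 1) (by omega), ?_⟩
    have h0 := hp 0
    rcases hlen : p.support.length with _ | _ | n
    · exact absurd hlen (List.length_pos_iff.mpr p.support_ne_nil).ne'
    · simp [hlen]
    · simpa using (h0 (by omega)).symm
  · rintro ⟨hp, ha⟩ (_ | i) hi
    · simpa using ha.symm
    · simpa using hp i (by omega)

lemma NonBacktracking.reverse {a b : V} {p : G.Walk a b} (hp : NonBacktracking p) :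
    NonBacktracking p.reverse := by
  intro i hi
  rw [Walk.support_reverse, List.length_reverse] at *
  rw [List.getElem?_reverse (by omega), List.getElem?_reverse (by omega),
    show p.support.length - 1 - i = p.support.length - 3 - i + 2 by omega,
    show p.support.length - 1 - (i + 2) = p.support.length - 3 - i by omega]
  exact (hp _ (by omega)).symm

lemma NonBacktracking.copy {a b a' b' : V} {p : G.Walk a b} (hp : NonBacktracking p)
    (ha : a = a') (hb : b = b') : NonBacktracking (p.copy ha hb) := by
  subst ha hb
  exact hp

variable (F : Sym2 V → ℝ)

@[simp] lemma walkWeight_cons {a x b : V} (h : G.Adj a x) (p : G.Walk x b) :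
    walkWeight F (Walk.cons h p) = F s(a, x) + walkWeight F p := by
  simp [walkWeight]

@[simp] lemma walkWeight_reverse {a b : V} (p : G.Walk a b) :
    walkWeight F p.reverse = walkWeight F p := by
  simp [walkWeight, Walk.edges_reverse, List.map_reverse]

@[simp] lemma walkWeight_copy {a b a' b' : V} (p : G.Walk a b) (ha : a = a') (hb : b = b') :
    walkWeight F (p.copy ha hb) = walkWeight F p := by
  subst ha hb
  rfl

variable {u v : V}

lemma NonBacktracking.exists_walk_from_adj (huv : G.Adj u v) {b : V} {p : G.Walk u b}
    (hp : NonBacktracking p) :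
    ∃ (q : G.Walk v b) (d : ℤ), NonBacktracking q ∧
      ∀ F : Sym2 V → ℝ, walkWeight F p = walkWeight F q + d * F s(u, v) := by
  cases p with
  | nil =>
    refine ⟨Walk.cons huv.symm Walk.nil, -1, fun i hi => by simp at hi, fun F => ?_⟩
    simp [Sym2.eq_swap]
  | cons h p =>
    rename_i x
    by_cases hx : x = v
    · subst hx
      exact ⟨p, 1, ((nonBacktracking_cons_iff h p).mp hp).1, fun F => by simp [add_comm]⟩
    · have hsupp : (Walk.cons h p).support[1]? ≠ some v := by
        rw [Walk.support_cons, ← p.cons_tail_support]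
        simpa using hx
      refine ⟨Walk.cons huv.symm (Walk.cons h p), -1,
        (nonBacktracking_cons_iff _ _).mpr ⟨hp, hsupp⟩, fun F => ?_⟩
      simp only [walkWeight_cons, Sym2.eq_swap (a := v)]
      push_cast
      ring

lemma NonBacktracking.exists_closed_walk_at_adj (huv : G.Adj u v) {p : G.Walk u u}
    (hp : NonBacktracking p) :
    ∃ (q : G.Walk v v) (d : ℤ), NonBacktracking q ∧
      ∀ F : Sym2 V → ℝ, walkWeight F p = walkWeight F q + d * F s(u, v) := by
  obtain ⟨q₁, d₁, hq₁, hw₁⟩ := hp.exists_walk_from_adj huv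
  obtain ⟨q₂, d₂, hq₂, hw₂⟩ := hq₁.reverse.exists_walk_from_adj huv
  refine ⟨q₂.reverse, d₁ + d₂, hq₂.reverse, fun F => ?_⟩
  rw [hw₁, ← walkWeight_reverse F q₁, hw₂, walkWeight_reverse]
  push_cast
  ring

end Walks

def IsWalkCombinationAt (G : SimpleGraph V) (v : V) (φ : (Sym2 V → ℝ) → ℝ) : Prop :=
  ∃ (l : ℕ) (W : Fin l → G.Walk v v) (c : Fin l → ℤ),
    (∀ i, NonBacktracking (W i)) ∧ (∀ i, c i ≠ 0) ∧
    ∀ F, ∑ i, (c i : ℝ) * walkWeight F (W i) = φ F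

namespace IsWalkCombinationAt

variable {v : V} {φ ψ : (Sym2 V → ℝ) → ℝ}

lemma add (hφ : IsWalkCombinationAt G v φ) (hψ : IsWalkCombinationAt G v ψ) :
    IsWalkCombinationAt G v (φ + ψ) := by
  obtain ⟨l, W, c, hW, hc, hsum⟩ := hφ
  obtain ⟨m, Y, b, hY, hb, hsumY⟩ := hψ
  refine ⟨l + m, Fin.append W Y, Fin.append c b, Fin.addCases ?_ ?_, Fin.addCases ?_ ?_,
    fun F => ?_⟩
  all_goals simp [Fin.sum_univ_add, hW, hc, hY, hb, hsum, hsumY]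

lemma zsmul (k : ℤ) (hk : k ≠ 0) (hφ : IsWalkCombinationAt G v φ) :
    IsWalkCombinationAt G v (fun F => k * φ F) := by
  obtain ⟨l, W, c, hW, hc, hsum⟩ := hφ
  refine ⟨l, W, fun i => k * c i, hW, fun i => mul_ne_zero hk (hc i), fun F => ?_⟩
  simp only [Int.cast_mul, mul_assoc, ← Finset.mul_sum, hsum]

end IsWalkCombinationAt

lemma revealedBySet_singleton_iff {v : V} {e : Sym2 V} :
    RevealedBySet G {v} e ↔
      ∃ ce : ℤ, ce ≠ 0 ∧ IsWalkCombinationAt G v (fun F => ce * F e) := by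
  constructor
  · rintro ⟨l, w, W, c, ce, hw, hW, hc, hce, hsum⟩
    have hv (i : Fin l) : w i = v := hw i
    refine ⟨ce, hce, l, fun i => (W i).copy (hv i) (hv i), c, fun i => (hW i).copy _ _, hc,
      fun F => ?_⟩
    simpa using hsum F
  · rintro ⟨ce, hce, l, W, c, hW, hc, hsum⟩
    exact ⟨l, fun _ => v, W, c, ce, fun _ => rfl, hW, hc, hce, hsum⟩

lemma RevealedBySet.mono {S T : Set V} (hST : S ⊆ T) {e : Sym2 V} (h : RevealedBySet G S e) :
    RevealedBySet G T e := by
  obtain ⟨l, w, W, c, ce, hw, hW, hc, hce, hsum⟩ := h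
  exact ⟨l, w, W, c, ce, fun i => hST (hw i), hW, hc, hce, hsum⟩

lemma NonBacktracking.exists_closed_walk_at_of_mem_pair {u v w : V} (huv : G.Adj u v)
    (hw : w ∈ ({u, v} : Set V)) {p : G.Walk w w} (hp : NonBacktracking p) :
    ∃ (q : G.Walk v v) (d : ℤ), NonBacktracking q ∧
      ∀ F : Sym2 V → ℝ, walkWeight F p = walkWeight F q + d * F s(u, v) := by
  rcases hw with rfl | rfl
  · exact hp.exists_closed_walk_at_adj huv
  · exact ⟨p, 0, hp, fun F => by simp⟩

lemma RevealedBySet.exists_walkCombinationAt_of_pair {u v : V} (huv : G.Adj u v) {e : Sym2 V}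
    (h : RevealedBySet G {u, v} e) :
    ∃ ce : ℤ, ce ≠ 0 ∧ ∃ D : ℤ,
      IsWalkCombinationAt G v (fun F => ce * F e - D * F s(u, v)) := by
  obtain ⟨l, w, W, c, ce, hw, hW, hc, hce, hsum⟩ := h
  choose W' d hW' hweight using fun i => (hW i).exists_closed_walk_at_of_mem_pair huv (hw i)
  refine ⟨ce, hce, ∑ i, c i * d i, l, W', c, hW', hc, fun F => ?_⟩
  simp only [← hsum F, hweight _ F, mul_add, Finset.sum_add_distrib, Int.cast_sum,
    Int.cast_mul, Finset.sum_mul, mul_assoc]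
  ring

/-- if `u` is a neighbor of `v` and the edge `{u,v}` is revealed by `v`, then the
edges revealed by `{u,v}` are exactly the edges revealed by `v`. -/
theorem revealed_pair_eq_of_edge_revealed {G : SimpleGraph V} (u v : V) (huv : G.Adj u v)
    (hf : RevealedBySet G {v} s(u, v)) :
    ∀ e : Sym2 V, RevealedBySet G {u, v} e ↔ RevealedBySet G {v} e := by
  intro e
  refine ⟨fun he => ?_, RevealedBySet.mono (Set.subset_insert u {v})⟩
  obtain ⟨ce, hce, D, hcomb⟩ := he.exists_walkCombinationAt_of_pair huv
  rw [revealedBySet_singleton_iff]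
  by_cases hD : D = 0
  · exact ⟨ce, hce, by simpa [hD] using hcomb⟩
  obtain ⟨bf, hbf, hfcomb⟩ := revealedBySet_singleton_iff.mp hf
  refine ⟨bf * ce, mul_ne_zero hbf hce, ?_⟩
  convert (hcomb.zsmul bf hbf).add (hfcomb.zsmul D hD) using 1
  ext F
  simp only [Pi.add_apply, Int.cast_mul]
  ring
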